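/- Theorem (decomposition of the S-spectrum): Let V be a two-sided quaternionic Banach space and T ∈ B(V). Suppose P₁ ∈ B(V) is a projector (P₁² = P₁) commuting with T, and let P₂ := ℐ − P₁. Let V_j := P_j(V) for j = 1,2 (closed right ℍ-submodules of V), let T_j := TP_j = P_jT, and let T̃_j denote the restriction of T_j to V_j, a bounded right-linear operator on V_j. Then σ_S(T) = σ_S(T̃₁) ∪ σ_S(T̃₂). -/

import Mathlib

/- A two-sided quaternionic Banach space `V` is a real Banach space with commuting left and right
`ℍ`-module structures; the right one is encoded as a module structure over `ℍᵐᵒᵖ`, so that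
`B(V) = V →L[ℍᵐᵒᵖ] V`. -/

open Quaternion MulOpposite

section general

variable {W : Type*} [AddCommGroup W] [TopologicalSpace W] [IsTopologicalAddGroup W]
  [Module ℝ W] [Module ℍ[ℝ]ᵐᵒᵖ W] [SMulCommClass ℍ[ℝ]ᵐᵒᵖ ℝ W] [ContinuousConstSMul ℝ W]

noncomputable def Qs (T : W →L[ℍ[ℝ]ᵐᵒᵖ] W) (s : ℍ[ℝ]) : W →L[ℍ[ℝ]ᵐᵒᵖ] W :=
  T * T - (2 * s.re) • T + (‖s‖ ^ 2) • 1

noncomputable def sSpectrum (T : W →L[ℍ[ℝ]ᵐᵒᵖ] W) : Set ℍ[ℝ] :=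
  {s : ℍ[ℝ] | ¬ IsUnit (Qs T s)}

end general

variable {V : Type*} [NormedAddCommGroup V] [NormedSpace ℝ V] [CompleteSpace V]
  [Module ℍ[ℝ] V] [Module ℍ[ℝ]ᵐᵒᵖ V]
  [IsScalarTower ℝ ℍ[ℝ] V] [IsScalarTower ℝ ℍ[ℝ]ᵐᵒᵖ V]
  [SMulCommClass ℍ[ℝ] ℍ[ℝ]ᵐᵒᵖ V]
  [ContinuousConstSMul ℍ[ℝ] V] [ContinuousConstSMul ℍ[ℝ]ᵐᵒᵖ V]

noncomputable def restrictCLM (S : V →L[ℍ[ℝ]ᵐᵒᵖ] V) (W : Submodule ℍ[ℝ]ᵐᵒᵖ V)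
    (h : ∀ v ∈ W, S v ∈ W) : ↥W →L[ℍ[ℝ]ᵐᵒᵖ] ↥W :=
  { toLinearMap := LinearMap.restrict (S : V →ₗ[ℍ[ℝ]ᵐᵒᵖ] V) h
    cont := Continuous.subtype_mk (S.continuous.comp continuous_subtype_val) _ }

lemma range_invariant (T P : V →L[ℍ[ℝ]ᵐᵒᵖ] V) (h : P * T = T * P) :
    ∀ v ∈ LinearMap.range (P : V →ₗ[ℍ[ℝ]ᵐᵒᵖ] V),
      (T * P) v ∈ LinearMap.range (P : V →ₗ[ℍ[ℝ]ᵐᵒᵖ] V) := by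
  rintro v ⟨w, rfl⟩
  refine ⟨T (P w), ?_⟩
  have := congrArg (fun S : V →L[ℍ[ℝ]ᵐᵒᵖ] V => S (P w)) h
  simpa using this

/- Since `P₁` commutes with `T`, it commutes with every `Q_s(T)`, so `Q_s(T)` leaves `V₁` and `V₂`
invariant, and on `V_j` (where `T P_j = T`) it restricts to `Q_s(T̃_j)`. An operator `A` commuting
with `P₁` is invertible iff both of its restrictions are: the inverse of `A` commutes with `P₁` and
restricts to inverses, and conversely the inverses `B_j` of the restrictions, composed as
`V → V_j → V_j ↪ V` with `P_j`, add up to an inverse of `A` because `P₁ + P₂ = ℐ`. -/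

theorem Commute.qs_right {W : Type*} [AddCommGroup W] [TopologicalSpace W]
    [IsTopologicalAddGroup W] [Module ℝ W] [Module ℍ[ℝ]ᵐᵒᵖ W] [SMulCommClass ℍ[ℝ]ᵐᵒᵖ ℝ W]
    [ContinuousConstSMul ℝ W] [IsScalarTower ℝ ℍ[ℝ]ᵐᵒᵖ W] {P T : W →L[ℍ[ℝ]ᵐᵒᵖ] W}
    (h : Commute P T) (s : ℍ[ℝ]) :
    Commute P (Qs T s) := by
  have hPT (v : W) : P (T v) = T (P v) := DFunLike.congr_fun h.eq v
  ext v
  simp [Qs, hPT, ContinuousLinearMap.map_smul_of_tower]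

section restriction

variable {E : Type*} [NormedAddCommGroup E] [Module ℍ[ℝ]ᵐᵒᵖ E]

theorem Commute.mem_range_of_mem_range {P A : E →L[ℍ[ℝ]ᵐᵒᵖ] E} (h : Commute P A) :
    ∀ v ∈ LinearMap.range (P : E →ₗ[ℍ[ℝ]ᵐᵒᵖ] E), A v ∈ LinearMap.range (P : E →ₗ[ℍ[ℝ]ᵐᵒᵖ] E) := by
  rintro _ ⟨w, rfl⟩
  exact ⟨A w, DFunLike.congr_fun h.eq w⟩

variable (W : Submodule ℍ[ℝ]ᵐᵒᵖ E)

@[simp]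
theorem restrictCLM_apply (S : E →L[ℍ[ℝ]ᵐᵒᵖ] E) (h : ∀ v ∈ W, S v ∈ W) (x : W) :
    (restrictCLM S W h x : E) = S x :=
  rfl

theorem isUnit_restrictCLM (u : (E →L[ℍ[ℝ]ᵐᵒᵖ] E)ˣ) (hu : ∀ v ∈ W, (u : E →L[ℍ[ℝ]ᵐᵒᵖ] E) v ∈ W)
    (hinv : ∀ v ∈ W, (↑u⁻¹ : E →L[ℍ[ℝ]ᵐᵒᵖ] E) v ∈ W) : IsUnit (restrictCLM u W hu) :=
  isUnit_iff_exists.mpr ⟨restrictCLM _ W hinv,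
    by ext x; exact DFunLike.congr_fun u.mul_inv (x : E),
    by ext x; exact DFunLike.congr_fun u.inv_mul (x : E)⟩

theorem qs_restrictCLM [NormedSpace ℝ E] [IsScalarTower ℝ ℍ[ℝ]ᵐᵒᵖ E] (T : E →L[ℍ[ℝ]ᵐᵒᵖ] E)
    (hT : ∀ v ∈ W, T v ∈ W) (s : ℍ[ℝ]) (hQ : ∀ v ∈ W, Qs T s v ∈ W) :
    Qs (restrictCLM T W hT) s = restrictCLM (Qs T s) W hQ := by
  ext x
  simp [Qs]

theorem restrictCLM_mul_eq_of_isIdempotentElem {T P : E →L[ℍ[ℝ]ᵐᵒᵖ] E}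
    (hP : IsIdempotentElem P)
    (h : ∀ v ∈ LinearMap.range (P : E →ₗ[ℍ[ℝ]ᵐᵒᵖ] E),
      (T * P) v ∈ LinearMap.range (P : E →ₗ[ℍ[ℝ]ᵐᵒᵖ] E))
    (h' : ∀ v ∈ LinearMap.range (P : E →ₗ[ℍ[ℝ]ᵐᵒᵖ] E),
      T v ∈ LinearMap.range (P : E →ₗ[ℍ[ℝ]ᵐᵒᵖ] E)) :
    restrictCLM (T * P) _ h = restrictCLM T _ h' := by
  ext ⟨_, w, rfl⟩
  exact congrArg T (DFunLike.congr_fun hP.eq w)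

noncomputable def rangeLift (P : E →L[ℍ[ℝ]ᵐᵒᵖ] E)
    (B : LinearMap.range (P : E →ₗ[ℍ[ℝ]ᵐᵒᵖ] E) →L[ℍ[ℝ]ᵐᵒᵖ] LinearMap.range (P : E →ₗ[ℍ[ℝ]ᵐᵒᵖ] E)) :
    E →L[ℍ[ℝ]ᵐᵒᵖ] E :=
  (LinearMap.range (P : E →ₗ[ℍ[ℝ]ᵐᵒᵖ] E)).subtypeL ∘L B ∘L
    P.codRestrict _ (LinearMap.mem_range_self (P : E →ₗ[ℍ[ℝ]ᵐᵒᵖ] E))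

variable {A P : E →L[ℍ[ℝ]ᵐᵒᵖ] E}
  {h : ∀ v ∈ LinearMap.range (P : E →ₗ[ℍ[ℝ]ᵐᵒᵖ] E), A v ∈ LinearMap.range (P : E →ₗ[ℍ[ℝ]ᵐᵒᵖ] E)}
  {B : LinearMap.range (P : E →ₗ[ℍ[ℝ]ᵐᵒᵖ] E) →L[ℍ[ℝ]ᵐᵒᵖ] LinearMap.range (P : E →ₗ[ℍ[ℝ]ᵐᵒᵖ] E)}

theorem mul_rangeLift (hB : restrictCLM A _ h * B = 1) : A * rangeLift P B = P := by
  ext v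
  exact congrArg Subtype.val
    (DFunLike.congr_fun hB (P.codRestrict _ (LinearMap.mem_range_self _) v))

theorem rangeLift_mul (hPA : Commute P A) (hB : B * restrictCLM A _ h = 1) :
    rangeLift P B * A = P := by
  ext v
  have hAπ : P.codRestrict _ (LinearMap.mem_range_self _) (A v) =
      restrictCLM A _ h (P.codRestrict _ (LinearMap.mem_range_self _) v) :=
    Subtype.ext (DFunLike.congr_fun hPA.eq v)
  exact congrArg Subtype.val ((congrArg B hAπ).trans (DFunLike.congr_fun hB _))

theorem isUnit_iff_isUnit_restrictCLM (hPA : Commute P A)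
    (h₂ : ∀ v ∈ LinearMap.range ((1 - P : E →L[ℍ[ℝ]ᵐᵒᵖ] E) : E →ₗ[ℍ[ℝ]ᵐᵒᵖ] E),
      A v ∈ LinearMap.range ((1 - P : E →L[ℍ[ℝ]ᵐᵒᵖ] E) : E →ₗ[ℍ[ℝ]ᵐᵒᵖ] E)) :
    IsUnit A ↔ IsUnit (restrictCLM A _ h) ∧ IsUnit (restrictCLM A _ h₂) := by
  have hPA₂ : Commute (1 - P) A := (Commute.one_left A).sub_left hPA
  constructor
  · rintro ⟨u, rfl⟩
    exact ⟨isUnit_restrictCLM _ u _ hPA.units_inv_right.mem_range_of_mem_range,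
      isUnit_restrictCLM _ u _ hPA₂.units_inv_right.mem_range_of_mem_range⟩
  · rintro ⟨⟨u₁, hu₁⟩, ⟨u₂, hu₂⟩⟩
    refine isUnit_iff_exists.mpr ⟨rangeLift P ↑u₁⁻¹ + rangeLift (1 - P) ↑u₂⁻¹, ?_, ?_⟩
    · rw [mul_add, mul_rangeLift (hu₁ ▸ u₁.mul_inv), mul_rangeLift (hu₂ ▸ u₂.mul_inv),
        add_sub_cancel]
    · rw [add_mul, rangeLift_mul hPA (hu₁ ▸ u₁.inv_mul), rangeLift_mul hPA₂ (hu₂ ▸ u₂.inv_mul),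
        add_sub_cancel]

end restriction

/-- **Decomposition of the S-spectrum.** Let `T ∈ B(V)` and let `P₁ ∈ B(V)` be a
projector commuting with `T`; set `P₂ = ℐ − P₁`, `V_j = P_j(V)`, `T_j = T P_j = P_j T`,
and let `T̃_j` be the restriction of `T_j` to `V_j`.  Then
`σ_S(T) = σ_S(T̃₁) ∪ σ_S(T̃₂)`. -/
theorem sSpectrum_decomposition (T P₁ : V →L[ℍ[ℝ]ᵐᵒᵖ] V)
    (hproj : P₁ * P₁ = P₁) (hcomm : P₁ * T = T * P₁) :
    sSpectrum T =
      sSpectrum (restrictCLM (T * P₁) (LinearMap.range (P₁ : V →ₗ[ℍ[ℝ]ᵐᵒᵖ] V))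
          (range_invariant T P₁ hcomm)) ∪
      sSpectrum (restrictCLM (T * (1 - P₁)) (LinearMap.range ((1 - P₁ : V →L[ℍ[ℝ]ᵐᵒᵖ] V) : V →ₗ[ℍ[ℝ]ᵐᵒᵖ] V))
          (range_invariant T (1 - P₁) (by rw [sub_mul, mul_sub, one_mul, mul_one, hcomm]))) := by
  have hproj₁ : IsIdempotentElem P₁ := hproj
  have hcomm₁ : Commute P₁ T := hcomm
  have hcomm₂ : Commute (1 - P₁) T := (Commute.one_left T).sub_left hcomm₁
  rw [restrictCLM_mul_eq_of_isIdempotentElem hproj₁ _ hcomm₁.mem_range_of_mem_range,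
    restrictCLM_mul_eq_of_isIdempotentElem hproj₁.one_sub _ hcomm₂.mem_range_of_mem_range]
  ext s
  simp only [sSpectrum, Set.mem_union, Set.mem_ofPred_eq]
  rw [qs_restrictCLM _ _ _ _ (hcomm₁.qs_right s).mem_range_of_mem_range,
    qs_restrictCLM _ _ _ _ (hcomm₂.qs_right s).mem_range_of_mem_range,
    isUnit_iff_isUnit_restrictCLM (hcomm₁.qs_right s), not_and_or]
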